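/- arXiv:2412.03245 — 2 statements merged into one kernel-verified Lean document; each statement's English description precedes it below -/
import Mathlib

section
/- Let A(𝔻) denote the disc algebra. A map T : A(𝔻) → A(𝔻) is an algebra automorphism (bijective, ℂ-linear and multiplicative) if and only if there exists φ ∈ Aut(𝔻) such that T f = f ∘ φ̂ for all f ∈ A(𝔻), where φ̂ denotes the continuous extension of φ to the closed unit disc. -/
open Complex Metric Set

local notation "𝔻" => Complex.UnitDisc

/-- The closed unit disc, as a subset of `ℂ`. -/
def cD : Set ℂ := Metric.closedBall 0 1

/-- A function on the open unit disc is analytic (holomorphic):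
it is the restriction of a function differentiable on the open unit ball. -/
def HolOn (f : 𝔻 → ℂ) : Prop :=
  ∃ F : ℂ → ℂ, DifferentiableOn ℂ F (Metric.ball 0 1) ∧ ∀ z : 𝔻, F ↑z = f z

/-- Membership in `H^∞`, the algebra of bounded analytic functions on the unit disc. -/
def MemHinf (f : 𝔻 → ℂ) : Prop :=
  HolOn f ∧ ∃ M : ℝ, ∀ z : 𝔻, ‖f z‖ ≤ M

/-- Membership in the disc algebra `A(𝔻)`: continuous on the closed unit disc,
analytic in its interior. -/
def MemDiscAlg (f : ↥cD → ℂ) : Prop :=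
  ∃ F : ℂ → ℂ, ContinuousOn F cD ∧ DifferentiableOn ℂ F (Metric.ball 0 1) ∧
    ∀ z : ↥cD, F ↑z = f z

/-- `φ ∈ Aut(𝔻)`: a bijective analytic self-map of the unit disc. -/
def IsDiscAut (φ : 𝔻 → 𝔻) : Prop :=
  (∃ F : ℂ → ℂ, DifferentiableOn ℂ F (Metric.ball 0 1) ∧ ∀ z : 𝔻, F ↑z = ↑(φ z)) ∧
  Function.Bijective φ

/-- A Möbius automorphism of the unit disc, given by its global formula
`Φ z = η (a - z) / (1 - conj a * z)` with `|a| < 1`, `|η| = 1`; this is the analytic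
extension to (a neighbourhood of) the closed unit disc of a disc automorphism. -/
def IsMobius (Φ : ℂ → ℂ) : Prop :=
  ∃ a η : ℂ, ‖a‖ < 1 ∧ ‖η‖ = 1 ∧
    ∀ z : ℂ, Φ z = η * (a - z) / (1 - (starRingEnd ℂ) a * z)

/-- `T` is an algebra automorphism of the set `A` of complex-valued functions:
a bijective, `ℂ`-linear and multiplicative self-map of `A`. -/
def IsAlgAutOn {ι : Type} (A : Set (ι → ℂ)) (T : (ι → ℂ) → (ι → ℂ)) : Prop :=
  (∀ f ∈ A, T f ∈ A) ∧
  (∀ f ∈ A, ∀ g ∈ A, T (f + g) = T f + T g) ∧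
  (∀ (c : ℂ), ∀ f ∈ A, T (c • f) = c • T f) ∧
  (∀ f ∈ A, ∀ g ∈ A, T (f * g) = T f * T g) ∧
  Set.InjOn T A ∧ Set.SurjOn T A A

/-- The subalgebra `ψ H^∞ = {ψ · g : g ∈ H^∞}`. -/
def psiH (ψ : 𝔻 → ℂ) : Set (𝔻 → ℂ) :=
  {f | ∃ g, MemHinf g ∧ f = fun z => ψ z * g z}

/-- The subalgebra `ψ A(𝔻) = {ψ · g : g ∈ A(𝔻)}`. -/
def psiA (ψ : ↥cD → ℂ) : Set (↥cD → ℂ) :=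
  {f | ∃ g, MemDiscAlg g ∧ f = fun z => ψ z * g z}

/-- The composition operator `C_φ : f ↦ f ∘ φ` is a well-defined algebra automorphism
of the set `A` (it is automatically linear and multiplicative). -/
def CompAutOn (A : Set (𝔻 → ℂ)) (φ : 𝔻 → 𝔻) : Prop :=
  (∀ f ∈ A, f ∘ φ ∈ A) ∧ Set.InjOn (fun f => f ∘ φ) A ∧ Set.SurjOn (fun f => f ∘ φ) A A

/-- The Möbius factor `τ_a(z) = (a - z)/(1 - conj a · z)`. -/
noncomputable def mobius (a z : ℂ) : ℂ := (a - z) / (1 - (starRingEnd ℂ) a * z)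

/-- `f` has a zero of order (multiplicity) `k` at `w`:
`f z = (z - w)^k g z` with `g` analytic and `g w ≠ 0`. -/
def ZeroOrderAt (f : 𝔻 → ℂ) (w : 𝔻) (k : ℕ) : Prop :=
  ∃ g : 𝔻 → ℂ, HolOn g ∧ g w ≠ 0 ∧ ∀ z : 𝔻, f z = ((z : ℂ) - (w : ℂ)) ^ k * g z

/-- `g` is an invertible element of `H^∞`. -/
def InvHinf (g : 𝔻 → ℂ) : Prop :=
  MemHinf g ∧ ∃ h : 𝔻 → ℂ, MemHinf h ∧ ∀ z, g z * h z = 1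

/-- `g` is an invertible element of the disc algebra `A(𝔻)`. -/
def InvDiscAlg (g : ↥cD → ℂ) : Prop :=
  MemDiscAlg g ∧ ∃ h : ↥cD → ℂ, MemDiscAlg h ∧ ∀ z, g z * h z = 1

/-!
A character `χ` of `A(𝔻)` takes on each `f` one of the values of `f` (otherwise `f - χ f` would
be invertible), so `|χ f| ≤ sup |f|`. Writing `f - f ζ = (z - ζ) · dslope f ζ` shows that `χ` is
evaluation at `ζ = χ z` on functions holomorphic near the closed disc, and the dilations `f (r ·)`
approximate every `f ∈ A(𝔻)` uniformly, so `χ` is evaluation at `ζ` on all of `A(𝔻)`. Hence an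
automorphism `T` is a composition operator `f ↦ f ∘ φ` for a bijection `φ = T z` of the closed
disc, holomorphic inside. By the maximum principle `φ` maps `𝔻` onto `𝔻`; with `a = φ⁻¹ 0`, the
Schwarz lemma applied to `φ ∘ τ_a` and to its inverse `τ_a ∘ φ⁻¹` makes `φ ∘ τ_a` a rotation
`η ·`, so `φ = η τ_a`.
-/

lemma mem_cD_iff {z : ℂ} : z ∈ cD ↔ ‖z‖ ≤ 1 := mem_closedBall_zero_iff

lemma ball_subset_cD : ball (0 : ℂ) 1 ⊆ cD := ball_subset_closedBall

section Mobius

variable {a z : ℂ}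

lemma mobius_denom_ne_zero (ha : ‖a‖ < 1) (hz : ‖z‖ ≤ 1) : 1 - starRingEnd ℂ a * z ≠ 0 := by
  intro h
  have hnorm : ‖a‖ * ‖z‖ = 1 := by
    simpa using congrArg norm (show starRingEnd ℂ a * z = 1 by linear_combination -h)
  nlinarith [norm_nonneg a, norm_nonneg z]

lemma sq_norm_mobius_denom_sub_sq_norm_mobius_num (a z : ℂ) :
    ‖1 - starRingEnd ℂ a * z‖ ^ 2 - ‖a - z‖ ^ 2 = (1 - ‖a‖ ^ 2) * (1 - ‖z‖ ^ 2) := by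
  simp only [Complex.sq_norm, Complex.normSq_apply, Complex.sub_re, Complex.sub_im,
    Complex.mul_re, Complex.mul_im, Complex.conj_re, Complex.conj_im, Complex.one_re,
    Complex.one_im]
  ring

lemma norm_mobius_le_one (ha : ‖a‖ < 1) (hz : ‖z‖ ≤ 1) : ‖mobius a z‖ ≤ 1 := by
  rw [mobius, norm_div, div_le_one (norm_pos_iff.2 (mobius_denom_ne_zero ha hz)),
    ← pow_le_pow_iff_left₀ (norm_nonneg _) (norm_nonneg _) two_ne_zero]
  have : 0 ≤ (1 - ‖a‖ ^ 2) * (1 - ‖z‖ ^ 2) := by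
    apply mul_nonneg <;> nlinarith [norm_nonneg a, norm_nonneg z]
  linarith [sq_norm_mobius_denom_sub_sq_norm_mobius_num a z]

lemma norm_mobius_lt_one (ha : ‖a‖ < 1) (hz : ‖z‖ < 1) : ‖mobius a z‖ < 1 := by
  rw [mobius, norm_div, div_lt_one (norm_pos_iff.2 (mobius_denom_ne_zero ha hz.le)),
    ← pow_lt_pow_iff_left₀ (norm_nonneg _) (norm_nonneg _) two_ne_zero]
  have : 0 < (1 - ‖a‖ ^ 2) * (1 - ‖z‖ ^ 2) := by
    apply mul_pos <;> nlinarith [norm_nonneg a, norm_nonneg z]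
  linarith [sq_norm_mobius_denom_sub_sq_norm_mobius_num a z]

lemma mobius_mobius (ha : ‖a‖ < 1) (hz : ‖z‖ ≤ 1) : mobius a (mobius a z) = z := by
  have hD := mobius_denom_ne_zero ha hz
  have hD' := mobius_denom_ne_zero ha (norm_mobius_le_one ha hz)
  have hw : mobius a z * (1 - starRingEnd ℂ a * z) = a - z := div_mul_cancel₀ _ hD
  rw [mobius, div_eq_iff hD']
  refine mul_left_cancel₀ hD ?_
  linear_combination (z * starRingEnd ℂ a - 1) * hw

@[simp] lemma mobius_self (a : ℂ) : mobius a a = 0 := by simp [mobius]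

@[simp] lemma mobius_zero (a : ℂ) : mobius a 0 = a := by simp [mobius]

lemma differentiableOn_mobius (ha : ‖a‖ < 1) : DifferentiableOn ℂ (mobius a) cD :=
  DifferentiableOn.div (by fun_prop) (by fun_prop)
    fun _ hz ↦ mobius_denom_ne_zero ha (mem_cD_iff.1 hz)

lemma mapsTo_mobius_cD (ha : ‖a‖ < 1) : MapsTo (mobius a) cD cD :=
  fun _ hz ↦ mem_cD_iff.2 (norm_mobius_le_one ha (mem_cD_iff.1 hz))

lemma mapsTo_mobius_ball (ha : ‖a‖ < 1) : MapsTo (mobius a) (ball 0 1) (ball 0 1) :=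
  fun _ hz ↦ mem_ball_zero_iff.2 (norm_mobius_lt_one ha (mem_ball_zero_iff.1 hz))

end Mobius

lemma exists_norm_comp_mul_sub_lt {F : ℂ → ℂ} (hF : ContinuousOn F cD) {ε : ℝ} (hε : 0 < ε) :
    ∃ r : ℝ, 0 < r ∧ r < 1 ∧ ∀ z ∈ cD, ‖F (r * z) - F z‖ < ε := by
  obtain ⟨δ, hδ, hFδ⟩ := Metric.uniformContinuousOn_iff.1
    ((isCompact_closedBall (0 : ℂ) 1).uniformContinuousOn_of_continuous hF) ε hε
  obtain ⟨r, hr₀, hr₁, hrδ⟩ : ∃ r : ℝ, 0 < r ∧ r < 1 ∧ 1 - r < δ :=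
    ⟨max (1 / 2) (1 - δ / 2), by positivity, max_lt (by norm_num) (by linarith),
      by linarith [le_max_right (1 / 2 : ℝ) (1 - δ / 2)]⟩
  refine ⟨r, hr₀, hr₁, fun z hz ↦ ?_⟩
  have hz' := mem_cD_iff.1 hz
  have hrz : (r : ℂ) * z ∈ cD := by
    rw [mem_cD_iff, norm_mul, Complex.norm_real, Real.norm_of_nonneg hr₀.le]
    nlinarith [norm_nonneg z]
  refine dist_eq_norm (F (r * z)) (F z) ▸ hFδ _ hrz _ hz ?_
  calc dist ((r : ℂ) * z) z = (1 - r) * ‖z‖ := by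
        rw [dist_eq_norm, ← sub_one_mul, norm_mul, ← Complex.ofReal_one, ← Complex.ofReal_sub,
          Complex.norm_real, Real.norm_of_nonpos (by linarith), neg_sub]
    _ ≤ 1 - r := by nlinarith
    _ < δ := hrδ

section AlgAut

variable {ι : Type} {A : Subalgebra ℂ (ι → ℂ)} {T : (ι → ℂ) → (ι → ℂ)}

lemma IsAlgAutOn.map_one (hT : IsAlgAutOn (A : Set (ι → ℂ)) T) : T 1 = 1 := by
  obtain ⟨e, he, hTe⟩ := hT.2.2.2.2.2 A.one_mem
  calc T 1 = T 1 * T e := by rw [hTe, mul_one]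
    _ = 1 := by rw [← hT.2.2.2.1 1 A.one_mem e he, one_mul, hTe]

def IsAlgAutOn.toAlgHom (hT : IsAlgAutOn (A : Set (ι → ℂ)) T) : A →ₐ[ℂ] A where
  toFun f := ⟨T f, hT.1 f f.2⟩
  map_one' := Subtype.ext hT.map_one
  map_mul' f g := Subtype.ext (hT.2.2.2.1 f f.2 g g.2)
  map_zero' := Subtype.ext (by simpa using hT.2.2.1 0 1 A.one_mem)
  map_add' f g := Subtype.ext (hT.2.1 f f.2 g g.2)
  commutes' c := Subtype.ext <| by
    simpa [Algebra.algebraMap_eq_smul_one, hT.map_one] using hT.2.2.1 c 1 A.one_mem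

noncomputable def IsAlgAutOn.toAlgEquiv (hT : IsAlgAutOn (A : Set (ι → ℂ)) T) : A ≃ₐ[ℂ] A :=
  AlgEquiv.ofBijective hT.toAlgHom
    ⟨fun f g hfg ↦ Subtype.ext (hT.2.2.2.2.1 f.2 g.2 (congrArg Subtype.val hfg)),
      fun f ↦ let ⟨g, hg, hTg⟩ := hT.2.2.2.2.2 f.2; ⟨⟨g, hg⟩, Subtype.ext hTg⟩⟩

lemma isAlgAutOn_of_comp_equiv (e : ι ≃ ι) (he : ∀ f ∈ A, f ∘ e ∈ A)
    (he' : ∀ f ∈ A, f ∘ e.symm ∈ A) (hT : ∀ f ∈ A, T f = f ∘ e) :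
    IsAlgAutOn (A : Set (ι → ℂ)) T := by
  refine ⟨fun f hf ↦ hT f hf ▸ he f hf, fun f hf g hg ↦ ?_, fun c f hf ↦ ?_, fun f hf g hg ↦ ?_,
    fun f hf g hg hfg ↦ ?_, fun f hf ↦ ⟨f ∘ e.symm, he' f hf, ?_⟩⟩
  · rw [hT _ (A.add_mem hf hg), hT f hf, hT g hg]; rfl
  · rw [hT _ (A.smul_mem hf c), hT f hf]; rfl
  · rw [hT _ (A.mul_mem hf hg), hT f hf, hT g hg]; rfl
  · rw [hT f hf, hT g hg] at hfg
    exact e.surjective.injective_comp_right hfg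
  · rw [hT _ (he' f hf)]
    ext; simp

end AlgAut

section DiscAlgebra

lemma memDiscAlg_of_differentiableOn {F : ℂ → ℂ} (hF : DifferentiableOn ℂ F cD) :
    MemDiscAlg fun z : cD ↦ F z :=
  ⟨F, hF.continuousOn, hF.mono ball_subset_cD, fun _ ↦ rfl⟩

lemma mapsTo_cD_of_coe_eq {U : ℂ → ℂ} {φ : cD → cD} (h : ∀ z : cD, U z = φ z) :
    MapsTo U cD cD :=
  fun z hz ↦ h ⟨z, hz⟩ ▸ (φ ⟨z, hz⟩).2

lemma MemDiscAlg.comp {Φ : ℂ → ℂ} (hd : DifferentiableOn ℂ Φ cD)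
    (hmaps : MapsTo Φ (ball 0 1) (ball 0 1)) {φ : cD → cD} (hφ : ∀ z, (φ z : ℂ) = Φ z)
    {f : cD → ℂ} (hf : MemDiscAlg f) : MemDiscAlg (f ∘ φ) := by
  obtain ⟨F, hFc, hFd, hFf⟩ := hf
  refine ⟨F ∘ Φ, hFc.comp hd.continuousOn (mapsTo_cD_of_coe_eq fun z ↦ (hφ z).symm),
    hFd.comp (hd.mono ball_subset_cD) hmaps, fun z ↦ ?_⟩
  simp only [Function.comp_apply, ← hφ, hFf]

def discAlgebra : Subalgebra ℂ (cD → ℂ) where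
  carrier := {f | MemDiscAlg f}
  mul_mem' := by
    rintro f g ⟨F, hFc, hFd, hFf⟩ ⟨G, hGc, hGd, hGg⟩
    exact ⟨F * G, hFc.mul hGc, hFd.mul hGd, fun z ↦ by simp [hFf, hGg]⟩
  add_mem' := by
    rintro f g ⟨F, hFc, hFd, hFf⟩ ⟨G, hGc, hGd, hGg⟩
    exact ⟨F + G, hFc.add hGc, hFd.add hGd, fun z ↦ by simp [hFf, hGg]⟩
  algebraMap_mem' c := memDiscAlg_of_differentiableOn (differentiableOn_const c)

namespace discAlgebra

instance : CoeFun discAlgebra fun _ ↦ cD → ℂ := ⟨Subtype.val⟩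

def coord : discAlgebra := ⟨fun z ↦ z, memDiscAlg_of_differentiableOn differentiableOn_id⟩

@[simp] lemma coord_apply (z : cD) : coord z = z := rfl

lemma isUnit_of_forall_ne_zero {f : discAlgebra} (hf : ∀ z, f z ≠ 0) : IsUnit f := by
  obtain ⟨F, hFc, hFd, hFf⟩ := f.2
  have hF : ∀ z ∈ cD, F z ≠ 0 := fun z hz ↦ hFf ⟨z, hz⟩ ▸ hf ⟨z, hz⟩
  refine isUnit_iff_exists_inv.2 ⟨⟨fun z ↦ (f z)⁻¹, fun z ↦ (F z)⁻¹, hFc.inv₀ hF,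
    hFd.inv fun z hz ↦ hF z (ball_subset_cD hz), fun z ↦ by simp [hFf]⟩, ?_⟩
  exact Subtype.ext (funext fun z ↦ mul_inv_cancel₀ (hf z))

section Character

variable (χ : discAlgebra →ₐ[ℂ] ℂ)

lemma exists_apply_eq (f : discAlgebra) : ∃ z, f z = χ f := by
  by_contra! h
  have hunit : IsUnit (f - algebraMap ℂ discAlgebra (χ f)) :=
    isUnit_of_forall_ne_zero fun z ↦ by simpa [sub_eq_zero] using h z
  simpa using hunit.map χ

lemma norm_apply_le (f : discAlgebra) {M : ℝ} (hM : ∀ z, ‖f z‖ ≤ M) : ‖χ f‖ ≤ M := by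
  obtain ⟨z, hz⟩ := exists_apply_eq χ f
  exact hz ▸ hM z

lemma norm_apply_coord_le_one : ‖χ coord‖ ≤ 1 :=
  norm_apply_le χ coord fun z ↦ mem_cD_iff.1 z.2

lemma apply_eq_of_differentiableOn {F : ℂ → ℂ} {R : ℝ} (hR : 1 < R)
    (hF : DifferentiableOn ℂ F (ball 0 R)) (f : discAlgebra) (hf : ∀ z, f z = F z) :
    χ f = F (χ coord) := by
  set ζ := χ coord
  have hcD : cD ⊆ ball 0 R := closedBall_subset_ball hR
  have hζ : ζ ∈ ball 0 R := hcD (mem_cD_iff.2 (norm_apply_coord_le_one χ))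
  let g : discAlgebra := ⟨fun z ↦ dslope F ζ z, memDiscAlg_of_differentiableOn
    (((Complex.differentiableOn_dslope (isOpen_ball.mem_nhds hζ)).2 hF).mono hcD)⟩
  have hfg : f = (coord - algebraMap ℂ _ ζ) * g + algebraMap ℂ _ (F ζ) := by
    refine Subtype.ext (funext fun z ↦ ?_)
    have := sub_smul_dslope F ζ z
    simp only [smul_eq_mul] at this
    simp [hf, g, coord, Algebra.algebraMap_eq_smul_one, this]
  simp [hfg, ζ]

theorem exists_forall_apply_eq_eval : ∃ z : cD, ∀ f : discAlgebra, χ f = f z := by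
  refine ⟨⟨χ coord, mem_cD_iff.2 (norm_apply_coord_le_one χ)⟩, fun f ↦ ?_⟩
  obtain ⟨F, hFc, hFd, hFf⟩ := f.2
  refine eq_of_forall_dist_le fun ε hε ↦ ?_
  obtain ⟨r, hr₀, hr₁, hr⟩ := exists_norm_comp_mul_sub_lt hFc (half_pos hε)
  have hFr : DifferentiableOn ℂ (fun w ↦ F (r * w)) (ball 0 r⁻¹) := by
    refine hFd.comp (by fun_prop) fun w hw ↦ ?_
    rw [mem_ball_zero_iff] at hw ⊢
    rw [norm_mul, Complex.norm_real, Real.norm_of_nonneg hr₀.le]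
    calc r * ‖w‖ < r * r⁻¹ := mul_lt_mul_of_pos_left hw hr₀
      _ = 1 := mul_inv_cancel₀ hr₀.ne'
  have hR : 1 < r⁻¹ := one_lt_inv₀ hr₀ |>.2 hr₁
  let fr : discAlgebra := ⟨fun w ↦ F (r * w), memDiscAlg_of_differentiableOn
    (hFr.mono (closedBall_subset_ball hR))⟩
  have hfr : χ fr = F (r * χ coord) := apply_eq_of_differentiableOn χ hR hFr fr fun _ ↦ rfl
  have hf_fr : ‖χ f - χ fr‖ ≤ ε / 2 := by
    rw [← map_sub]
    refine norm_apply_le χ _ fun w ↦ ?_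
    simpa [fr, ← hFf, norm_sub_rev] using (hr w w.2).le
  have hfr_f : ‖F (r * χ coord) - F (χ coord)‖ ≤ ε / 2 :=
    (hr _ (mem_cD_iff.2 (norm_apply_coord_le_one χ))).le
  calc dist (χ f) (f _) = ‖(χ f - χ fr) + (F (r * χ coord) - F (χ coord))‖ := by
        rw [dist_eq_norm, hfr, ← hFf]; ring_nf
    _ ≤ ε := (norm_add_le _ _).trans (by linarith)

end Character

lemma leftInverse_of_forall_comp_eq (S : discAlgebra ≃ₐ[ℂ] discAlgebra) {φ ψ : cD → cD}
    (hφ : ∀ f, S f = f ∘ φ) (hψ : ∀ f, S.symm f = f ∘ ψ) : Function.LeftInverse ψ φ := by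
  intro w
  have := congrFun (hφ (S.symm coord)) w
  rw [AlgEquiv.apply_symm_apply, Function.comp_apply, hψ] at this
  exact Subtype.ext this.symm

theorem exists_comp_eq_of_algHom (T : discAlgebra →ₐ[ℂ] discAlgebra) :
    ∃ φ : cD → cD, ∀ f, T f = f ∘ φ := by
  choose φ hφ using fun w ↦
    exists_forall_apply_eq_eval ((Pi.evalAlgHom ℂ (fun _ ↦ ℂ) w).comp (discAlgebra.val.comp T))
  exact ⟨φ, fun f ↦ funext fun w ↦ hφ w f⟩

theorem exists_equiv_comp_eq (T : discAlgebra ≃ₐ[ℂ] discAlgebra) :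
    ∃ e : cD ≃ cD, ∀ f, T f = f ∘ e := by
  obtain ⟨φ, hφ⟩ : ∃ φ : cD → cD, ∀ f, T f = f ∘ φ := exists_comp_eq_of_algHom T.toAlgHom
  obtain ⟨ψ, hψ⟩ : ∃ ψ : cD → cD, ∀ f, T.symm f = f ∘ ψ :=
    exists_comp_eq_of_algHom T.symm.toAlgHom
  exact ⟨⟨φ, ψ, leftInverse_of_forall_comp_eq T hφ hψ,
    leftInverse_of_forall_comp_eq T.symm hψ (by simpa using hφ)⟩, hφ⟩

end discAlgebra

end DiscAlgebra

section Rigidity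

lemma mapsTo_ball_of_injOn {U : ℂ → ℂ} (hd : DifferentiableOn ℂ U (ball 0 1))
    (hmaps : MapsTo U (ball 0 1) cD) (hinj : InjOn U (ball 0 1)) :
    MapsTo U (ball 0 1) (ball 0 1) := by
  intro x hx
  by_contra hUx
  have hmax : IsMaxOn (norm ∘ U) (ball 0 1) x := fun y hy ↦
    (mem_cD_iff.1 (hmaps hy)).trans (not_lt.1 (mt mem_ball_zero_iff.2 hUx))
  have hconst := Complex.eqOn_of_isPreconnected_of_isMaxOn_norm
    (convex_ball (0 : ℂ) 1).isPreconnected isOpen_ball hd hx hmax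
  have h0 : (0 : ℂ) ∈ ball 0 1 := mem_ball_self one_pos
  have h1 : (1 / 2 : ℂ) ∈ ball 0 1 := by rw [mem_ball_zero_iff]; norm_num
  have := hinj h0 h1 ((hconst h0).trans (hconst h1).symm)
  norm_num at this

lemma exists_eqOn_mul_of_leftInvOn {G H : ℂ → ℂ} (hG : DifferentiableOn ℂ G (ball 0 1))
    (hGmaps : MapsTo G (ball 0 1) (ball 0 1)) (hG0 : G 0 = 0)
    (hH : DifferentiableOn ℂ H (ball 0 1)) (hHmaps : MapsTo H (ball 0 1) (ball 0 1))
    (hH0 : H 0 = 0) (hHG : LeftInvOn H G (ball 0 1)) :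
    ∃ η : ℂ, ‖η‖ = 1 ∧ EqOn G (fun z ↦ η * z) (ball 0 1) := by
  set z₀ : ℂ := 1 / 2
  have hz₀ : ‖z₀‖ < 1 := by norm_num [z₀]
  have hz₀b : z₀ ∈ ball 0 1 := mem_ball_zero_iff.2 hz₀
  have hGz₀ : ‖G z₀‖ = ‖z₀‖ := by
    refine le_antisymm (Complex.norm_le_norm_of_mapsTo_ball hG
      (hGmaps.mono_right ball_subset_closedBall) hG0 hz₀) ?_
    calc ‖z₀‖ = ‖H (G z₀)‖ := by rw [hHG hz₀b]
      _ ≤ ‖G z₀‖ := Complex.norm_le_norm_of_mapsTo_ball hH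
          (hHmaps.mono_right ball_subset_closedBall) hH0 (mem_ball_zero_iff.1 (hGmaps hz₀b))
  have hslope : ‖dslope G 0 z₀‖ = 1 / 1 := by
    rw [dslope_of_ne _ (by norm_num [z₀]), slope_def_field, hG0, sub_zero, sub_zero, norm_div,
      hGz₀, div_self (by norm_num [z₀]), div_one]
  obtain ⟨η, hη, hGη⟩ := Complex.affine_of_mapsTo_ball_of_exists_norm_dslope_eq_div' hG
    (by rw [hG0]; exact hGmaps.mono_right ball_subset_closedBall) ⟨z₀, hz₀b, hslope⟩
  exact ⟨η, by simpa using hη, fun z hz ↦ by simpa [hG0, mul_comm] using hGη hz⟩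

theorem exists_eqOn_mul_mobius_of_invOn {U V : ℂ → ℂ} (hUc : ContinuousOn U cD)
    (hUd : DifferentiableOn ℂ U (ball 0 1)) (hVd : DifferentiableOn ℂ V (ball 0 1))
    (hU : MapsTo U cD cD) (hV : MapsTo V cD cD) (hUV : InvOn V U cD cD) :
    ∃ a η : ℂ, ‖a‖ < 1 ∧ ‖η‖ = 1 ∧ EqOn U (fun z ↦ η * mobius a z) cD := by
  have h0 : (0 : ℂ) ∈ ball 0 1 := mem_ball_self one_pos
  have hUb : MapsTo U (ball 0 1) (ball 0 1) :=
    mapsTo_ball_of_injOn hUd (hU.mono_left ball_subset_cD) (hUV.1.injOn.mono ball_subset_cD)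
  have hVb : MapsTo V (ball 0 1) (ball 0 1) :=
    mapsTo_ball_of_injOn hVd (hV.mono_left ball_subset_cD) (hUV.2.injOn.mono ball_subset_cD)
  set a := V 0
  have ha : ‖a‖ < 1 := mem_ball_zero_iff.1 (hVb h0)
  have hm := (differentiableOn_mobius ha).mono ball_subset_cD
  -- `U` and `V` conjugated by the involution `mobius a` fix `0`.
  obtain ⟨η, hη, hUη⟩ := exists_eqOn_mul_of_leftInvOn (hUd.comp hm (mapsTo_mobius_ball ha))
    (hUb.comp (mapsTo_mobius_ball ha)) (by simp [a, hUV.2 (ball_subset_cD h0)])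
    (hm.comp hVd hVb) ((mapsTo_mobius_ball ha).comp hVb) (by simp [a])
    fun z hz ↦ by
      simp [hUV.1 (mapsTo_mobius_cD ha (ball_subset_cD hz)),
        mobius_mobius ha (mem_cD_iff.1 (ball_subset_cD hz))]
  refine ⟨a, η, ha, hη, EqOn.of_subset_closure (fun z hz ↦ ?_) hUc
    ((differentiableOn_mobius ha).const_mul η).continuousOn ball_subset_cD
    (closure_ball (0 : ℂ) one_ne_zero).ge⟩
  simpa [mobius_mobius ha (mem_cD_iff.1 (ball_subset_cD hz))] using
    hUη (mapsTo_mobius_ball ha hz)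

end Rigidity

section Main

variable {T : (cD → ℂ) → (cD → ℂ)}

theorem isAlgAutOn_of_coe_eq_mul_mobius {a η : ℂ} (ha : ‖a‖ < 1) (hη : ‖η‖ = 1)
    {φ : cD → cD} (hφ : ∀ z, (φ z : ℂ) = η * mobius a z)
    (hT : ∀ f, MemDiscAlg f → T f = f ∘ φ) : IsAlgAutOn {f | MemDiscAlg f} T := by
  have hηη : starRingEnd ℂ η * η = 1 := by rw [Complex.conj_mul', hη]; norm_num
  have hΦb : MapsTo (fun z ↦ η * mobius a z) (ball 0 1) (ball 0 1) := fun z hz ↦ by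
    simpa [hη] using mapsTo_mobius_ball ha hz
  set Ψ : ℂ → ℂ := fun w ↦ mobius a (starRingEnd ℂ η * w)
  have hΨ : MapsTo Ψ cD cD := fun w hw ↦ mapsTo_mobius_cD ha (by simpa [mem_cD_iff, hη] using hw)
  have hΨb : MapsTo Ψ (ball 0 1) (ball 0 1) := fun w hw ↦
    mapsTo_mobius_ball ha (by simpa [hη] using hw)
  have hΨd : DifferentiableOn ℂ Ψ cD := (differentiableOn_mobius ha).comp (by fun_prop)
    fun w hw ↦ by simpa [mem_cD_iff, hη] using hw
  let ψ : cD → cD := fun w ↦ ⟨Ψ w, hΨ w.2⟩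
  let e : cD ≃ cD :=
    { toFun := φ
      invFun := ψ
      left_inv := fun z ↦ Subtype.ext <| by
        simp [ψ, Ψ, hφ, ← mul_assoc, hηη, mobius_mobius ha (mem_cD_iff.1 z.2)]
      right_inv := fun w ↦ Subtype.ext <| by
        have hw : ‖starRingEnd ℂ η * w‖ ≤ 1 := by simpa [hη] using mem_cD_iff.1 w.2
        simp [ψ, Ψ, hφ, mobius_mobius ha hw, ← mul_assoc, Complex.mul_conj', hη] }
  exact isAlgAutOn_of_comp_equiv (A := discAlgebra) e
    (fun f hf ↦ MemDiscAlg.comp ((differentiableOn_mobius ha).const_mul η) hΦb hφ hf)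
    (fun f hf ↦ MemDiscAlg.comp hΨd hΨb (fun _ ↦ rfl) hf) hT

theorem exists_coe_eq_mul_mobius_of_isAlgAutOn (hT : IsAlgAutOn {f | MemDiscAlg f} T) :
    ∃ a η : ℂ, ‖a‖ < 1 ∧ ‖η‖ = 1 ∧ ∃ φ : cD → cD,
      (∀ z, (φ z : ℂ) = η * mobius a z) ∧ ∀ f, MemDiscAlg f → T f = f ∘ φ := by
  set S := hT.toAlgEquiv (A := discAlgebra)
  obtain ⟨e, he⟩ := discAlgebra.exists_equiv_comp_eq S
  obtain ⟨U, hUc, hUd, hU⟩ := (S discAlgebra.coord).2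
  obtain ⟨V, -, hVd, hV⟩ := (S.symm discAlgebra.coord).2
  have hUe : ∀ z : cD, U z = e z := fun z ↦ (hU z).trans (congrFun (he _) z)
  have hVe : ∀ z : cD, V z = e.symm z := fun z ↦ by
    simpa [hV] using (congrFun (he (S.symm discAlgebra.coord)) (e.symm z)).symm
  have hUV : InvOn V U cD cD :=
    ⟨fun z hz ↦ by simp [hUe ⟨z, hz⟩, hVe (e ⟨z, hz⟩)],
      fun z hz ↦ by simp [hVe ⟨z, hz⟩, hUe (e.symm ⟨z, hz⟩)]⟩
  obtain ⟨a, η, ha, hη, hUmob⟩ := exists_eqOn_mul_mobius_of_invOn hUc hUd hVd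
    (mapsTo_cD_of_coe_eq hUe) (mapsTo_cD_of_coe_eq hVe) hUV
  exact ⟨a, η, ha, hη, e, fun z ↦ (hUe z).symm.trans (hUmob z.2), fun f hf ↦ he ⟨f, hf⟩⟩

end Main

/-- `T` is an algebra automorphism of the disc algebra `A(𝔻)` iff
`T f = f ∘ φ̂` for the continuous extension `φ̂` of some `φ ∈ Aut(𝔻)`. -/
theorem stmt_0 (T : (↥cD → ℂ) → (↥cD → ℂ)) :
    IsAlgAutOn {f | MemDiscAlg f} T ↔
      ∃ Φ : ℂ → ℂ, IsMobius Φ ∧ ∃ φh : ↥cD → ↥cD,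
        (∀ z : ↥cD, (↑(φh z) : ℂ) = Φ ↑z) ∧
        ∀ f, MemDiscAlg f → T f = f ∘ φh := by
  constructor
  · intro hT
    obtain ⟨a, η, ha, hη, φ, hφ, hTφ⟩ := exists_coe_eq_mul_mobius_of_isAlgAutOn hT
    exact ⟨fun z ↦ η * mobius a z, ⟨a, η, ha, hη, fun z ↦ (mul_div_assoc _ _ _).symm⟩, φ, hφ, hTφ⟩
  · rintro ⟨Φ, ⟨a, η, ha, hη, hΦ⟩, φ, hφ, hT⟩
    exact isAlgAutOn_of_coe_eq_mul_mobius ha hη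
      (fun z ↦ (hφ z).trans ((hΦ z).trans (mul_div_assoc _ _ _))) hT
end

section
/- Let 𝒜 = {f ∈ H^∞ : f(0) = 0}. A map T : 𝒜 → 𝒜 is an algebra automorphism (bijective, ℂ-linear and multiplicative) if and only if there exists θ ∈ ℝ such that T f = f ∘ (z ↦ e^{iθ}z) for all f ∈ 𝒜. -/
open Complex Metric Set

local notation "𝔻" => Complex.UnitDisc

/-- The subalgebra `𝒜 = {f ∈ H^∞ : f(0) = 0}`. -/
def calA : Set (𝔻 → ℂ) := {f | MemHinf f ∧ f 0 = 0}

/-!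
An algebra endomorphism `φ` of `𝒜 = z H^∞` is composition with `b = φ z`. Indeed `b` takes values
in the closed disc: for `|λ| > 1` the function `k = z / (z - λ)` lies in `𝒜` and `z k - λ k = z`,
so applying `φ` shows that `b` never takes the value `λ`; by the Schwarz lemma `|b z| ≤ |z|`.
Writing `f = c z + (z - w) z v` with `w = b z₀` and `z v ∈ 𝒜` then gives `φ f (z₀) = c w = f w`.
For an automorphism the inverse is composition with some `b'`, and `b' ∘ b = id` forces
`|b z| = |z|`, so `b` is a rotation by the equality case of the Schwarz lemma.
-/

namespace HolOn

variable {f g : 𝔻 → ℂ}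

lemma add (hf : HolOn f) (hg : HolOn g) : HolOn (f + g) := by
  obtain ⟨F, hFd, hFe⟩ := hf
  obtain ⟨G, hGd, hGe⟩ := hg
  exact ⟨F + G, hFd.add hGd, fun z => by simp [hFe z, hGe z]⟩

lemma mul (hf : HolOn f) (hg : HolOn g) : HolOn (f * g) := by
  obtain ⟨F, hFd, hFe⟩ := hf
  obtain ⟨G, hGd, hGe⟩ := hg
  exact ⟨F * G, hFd.mul hGd, fun z => by simp [hFe z, hGe z]⟩

lemma const_smul (c : ℂ) (hf : HolOn f) : HolOn (c • f) := by
  obtain ⟨F, hFd, hFe⟩ := hf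
  exact ⟨c • F, hFd.const_smul c, fun z => by simp [hFe z]⟩

lemma const (c : ℂ) : HolOn fun _ => c :=
  ⟨fun _ => c, differentiableOn_const c, fun _ => rfl⟩

lemma coe : HolOn fun z : 𝔻 => (z : ℂ) :=
  ⟨id, differentiableOn_id, fun _ => rfl⟩

lemma norm_le_norm (hf : HolOn f) (h₀ : f 0 = 0) (h₁ : ∀ z, ‖f z‖ ≤ 1) (z : 𝔻) :
    ‖f z‖ ≤ ‖(z : ℂ)‖ := by
  obtain ⟨F, hFd, hFe⟩ := hf
  have hF₀ : F 0 = 0 := by simpa [h₀] using hFe 0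
  have hmaps : MapsTo F (ball 0 1) (closedBall 0 1) := fun x hx => by
    simpa [← hFe] using h₁ (.mk x (mem_ball_zero_iff.1 hx))
  simpa [hFe] using Complex.norm_le_norm_of_mapsTo_ball hFd hmaps hF₀ z.norm_lt_one

lemma exists_eq_mul_of_norm_eq (hf : HolOn f) (h : ∀ z, ‖f z‖ = ‖(z : ℂ)‖) :
    ∃ c : ℂ, ‖c‖ = 1 ∧ ∀ z, f z = c * z := by
  obtain ⟨F, hFd, hFe⟩ := hf
  have hnorm : ∀ x ∈ ball (0 : ℂ) 1, ‖F x‖ = ‖x‖ := fun x hx => by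
    simpa [← hFe] using h (.mk x (mem_ball_zero_iff.1 hx))
  have hF₀ : F 0 = 0 := by simpa using hnorm 0 (mem_ball_self one_pos)
  have hmaps : MapsTo F (ball 0 1) (closedBall (F 0) 1) := fun x hx => by
    simpa [hF₀, hnorm x hx] using (mem_ball_zero_iff.1 hx).le
  have hhalf : (2⁻¹ : ℂ) ∈ ball (0 : ℂ) 1 := by norm_num
  have hslope : ‖dslope F 0 2⁻¹‖ = 1 / 1 := by
    rw [dslope_of_ne _ (by norm_num), slope_def_field, hF₀, sub_zero, sub_zero, norm_div,
      hnorm _ hhalf, div_self (by norm_num)]; norm_num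
  obtain ⟨c, hc, hF⟩ :=
    Complex.affine_of_mapsTo_ball_of_exists_norm_dslope_eq_div' hFd hmaps ⟨_, hhalf, hslope⟩
  refine ⟨c, by simpa using hc, fun z => ?_⟩
  simpa [← hFe, hF₀, mul_comm] using hF (mem_ball_zero_iff.2 z.norm_lt_one)

end HolOn

namespace MemHinf

variable {f g : 𝔻 → ℂ}

lemma add (hf : MemHinf f) (hg : MemHinf g) : MemHinf (f + g) := by
  obtain ⟨hf, M, hM⟩ := hf
  obtain ⟨hg, N, hN⟩ := hg
  exact ⟨hf.add hg, M + N, fun z => (norm_add_le _ _).trans (add_le_add (hM z) (hN z))⟩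

lemma mul (hf : MemHinf f) (hg : MemHinf g) : MemHinf (f * g) := by
  obtain ⟨hf, M, hM⟩ := hf
  obtain ⟨hg, N, hN⟩ := hg
  refine ⟨hf.mul hg, M * N, fun z => ?_⟩
  rw [Pi.mul_apply, norm_mul]
  exact mul_le_mul (hM z) (hN z) (norm_nonneg _) ((norm_nonneg _).trans (hM 0))

lemma const_smul (c : ℂ) (hf : MemHinf f) : MemHinf (c • f) := by
  obtain ⟨hf, M, hM⟩ := hf
  refine ⟨hf.const_smul c, ‖c‖ * M, fun z => ?_⟩
  rw [Pi.smul_apply, norm_smul]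
  exact mul_le_mul_of_nonneg_left (hM z) (norm_nonneg c)

lemma const (c : ℂ) : MemHinf fun _ => c :=
  ⟨.const c, ‖c‖, fun _ => le_rfl⟩

lemma coe : MemHinf fun z : 𝔻 => (z : ℂ) :=
  ⟨.coe, 1, fun z => z.norm_lt_one.le⟩

lemma sub_const (hf : MemHinf f) (a : ℂ) : MemHinf fun z => f z - a := by
  convert hf.add (const (-a)) using 1
  ext z
  simp [sub_eq_add_neg]

/-- The quotient is `dslope F w`: bounded near `w` by compactness, and away from `w` because
`|z - w| ≥ δ` there. -/
lemma exists_eq_sub_mul (hf : MemHinf f) {w : 𝔻} (hfw : f w = 0) :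
    ∃ g, MemHinf g ∧ ∀ z : 𝔻, f z = ((z : ℂ) - w) * g z := by
  obtain ⟨⟨F, hFd, hFe⟩, M, hM⟩ := hf
  set G := dslope F w
  have hGd : DifferentiableOn ℂ G (ball 0 1) :=
    (Complex.differentiableOn_dslope (isOpen_ball.mem_nhds w.2)).2 hFd
  have hfactor : ∀ z : 𝔻, f z = ((z : ℂ) - w) * G z := fun z => by
    rw [← smul_eq_mul, sub_smul_dslope, hFe, hFe, hfw, sub_zero]
  set δ := (1 - ‖(w : ℂ)‖) / 2
  have hδ : 0 < δ := by have := w.norm_lt_one; simp only [δ]; linarith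
  have hK : closedBall (w : ℂ) δ ⊆ ball 0 1 := closedBall_subset_ball' <| by
    have := w.norm_lt_one; simp only [δ, dist_zero_right]; linarith
  obtain ⟨C, hC⟩ := (isCompact_closedBall (w : ℂ) δ).exists_bound_of_continuousOn
    (hGd.continuousOn.mono hK)
  refine ⟨fun z => G z, ⟨⟨G, hGd, fun _ => rfl⟩, max C (M / δ), fun z => ?_⟩, hfactor⟩
  by_cases hz : (z : ℂ) ∈ closedBall (w : ℂ) δ
  · exact (hC _ hz).trans (le_max_left _ _)
  · have hdist : δ ≤ ‖(z : ℂ) - w‖ := by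
      rw [mem_closedBall, dist_eq_norm, not_le] at hz
      exact hz.le
    refine le_max_of_le_right ((le_div_iff₀ hδ).2 ?_)
    calc ‖G z‖ * δ ≤ ‖G z‖ * ‖(z : ℂ) - w‖ := mul_le_mul_of_nonneg_left hdist (norm_nonneg _)
      _ = ‖f z‖ := by rw [hfactor, norm_mul, mul_comm]
      _ ≤ M := hM z

end MemHinf

def calANonUnitalSubalgebra : NonUnitalSubalgebra ℂ (𝔻 → ℂ) where
  carrier := calA
  add_mem' hf hg := ⟨hf.1.add hg.1, by simp [hf.2, hg.2]⟩
  zero_mem' := ⟨MemHinf.const 0, rfl⟩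
  mul_mem' hf hg := ⟨hf.1.mul hg.1, by simp [hf.2]⟩
  smul_mem' c _ hf := ⟨hf.1.const_smul c, by simp [hf.2]⟩

local notation "𝒜" => calANonUnitalSubalgebra

namespace calANonUnitalSubalgebra

def coordinate : 𝒜 := ⟨fun z => (z : ℂ), MemHinf.coe, Complex.UnitDisc.coe_zero⟩

lemma coordinate_apply (z : 𝔻) : (coordinate : 𝔻 → ℂ) z = z := rfl

lemma exists_eq_smul_coordinate_add (f : 𝒜) (w : 𝔻) :
    ∃ (c : ℂ) (v : 𝒜), f = c • coordinate + coordinate * v - (w : ℂ) • v := by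
  obtain ⟨g, hg, hfg⟩ := f.2.1.exists_eq_sub_mul f.2.2
  simp only [Complex.UnitDisc.coe_zero, sub_zero] at hfg
  obtain ⟨k, hk, hgk⟩ := (hg.sub_const (g w)).exists_eq_sub_mul (w := w) (sub_self _)
  refine ⟨g w, ⟨fun z => z * k z, MemHinf.coe.mul hk, by simp⟩, Subtype.ext (funext fun z => ?_)⟩
  simp only [coordinate_apply, NonUnitalSubalgebra.coe_sub, NonUnitalSubalgebra.coe_add,
    NonUnitalSubalgebra.coe_mul, NonUnitalSubalgebra.coe_smul, Pi.sub_apply, Pi.add_apply,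
    Pi.mul_apply, Pi.smul_apply, smul_eq_mul]
  linear_combination hfg z + (z : ℂ) * hgk z

lemma exists_coordinate_mul_sub_smul {a : ℂ} (ha : 1 < ‖a‖) :
    ∃ k : 𝒜, coordinate * k - a • k = coordinate := by
  have hne : ∀ x : ℂ, ‖x‖ < 1 → x - a ≠ 0 := fun x hx h => by
    rw [sub_eq_zero.1 h] at hx; linarith
  have hk : MemHinf fun z : 𝔻 => (z : ℂ) / (z - a) := by
    refine ⟨⟨fun x => x / (x - a), differentiableOn_id.div (differentiableOn_id.sub_const a)
      fun x hx => hne x (mem_ball_zero_iff.1 hx), fun _ => rfl⟩, 1 / (‖a‖ - 1), fun z => ?_⟩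
    have hz := z.norm_lt_one
    have hlow : ‖a‖ - 1 ≤ ‖(z : ℂ) - a‖ := by
      have := norm_sub_norm_le a (z : ℂ); rw [norm_sub_rev] at this; linarith
    rw [norm_div]
    exact div_le_div₀ zero_le_one hz.le (by linarith) hlow
  refine ⟨⟨_, hk, by simp⟩, Subtype.ext (funext fun z => ?_)⟩
  have := hne _ z.norm_lt_one
  simp only [coordinate_apply, NonUnitalSubalgebra.coe_sub, NonUnitalSubalgebra.coe_mul,
    NonUnitalSubalgebra.coe_smul, Pi.sub_apply, Pi.mul_apply, Pi.smul_apply, smul_eq_mul]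
  field_simp

section Endomorphism

variable (φ : 𝒜 →ₙₐ[ℂ] 𝒜)

lemma norm_apply_coordinate_le_one (z : 𝔻) : ‖(φ coordinate : 𝔻 → ℂ) z‖ ≤ 1 := by
  by_contra! h
  obtain ⟨k, hk⟩ := exists_coordinate_mul_sub_smul h
  have := congrArg (fun f : 𝒜 => (f : 𝔻 → ℂ) z) (congrArg φ hk)
  simp only [map_sub, map_mul, map_smul, NonUnitalSubalgebra.coe_sub,
    NonUnitalSubalgebra.coe_mul, NonUnitalSubalgebra.coe_smul, Pi.sub_apply, Pi.mul_apply,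
    Pi.smul_apply, smul_eq_mul, sub_self] at this
  rw [← this, norm_zero] at h
  linarith

lemma norm_apply_coordinate_le (z : 𝔻) : ‖(φ coordinate : 𝔻 → ℂ) z‖ ≤ ‖(z : ℂ)‖ :=
  (φ coordinate).2.1.1.norm_le_norm (φ coordinate).2.2 (norm_apply_coordinate_le_one φ) z

def symbol (z : 𝔻) : 𝔻 :=
  .mk ((φ coordinate : 𝔻 → ℂ) z) ((norm_apply_coordinate_le φ z).trans_lt z.norm_lt_one)

lemma coe_symbol (z : 𝔻) : (symbol φ z : ℂ) = (φ coordinate : 𝔻 → ℂ) z := rfl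

lemma apply_eq_comp_symbol (f : 𝒜) : (φ f : 𝔻 → ℂ) = f ∘ symbol φ := by
  funext z
  obtain ⟨c, v, rfl⟩ := exists_eq_smul_coordinate_add f (symbol φ z)
  simp [coordinate_apply, ← coe_symbol]

lemma exists_coe_symbol_eq_mul (hφ : Function.Bijective φ) :
    ∃ c : ℂ, ‖c‖ = 1 ∧ ∀ z, (symbol φ z : ℂ) = c * z := by
  let ψ := φ.inverse _ (Function.leftInverse_invFun hφ.1) (Function.rightInverse_invFun hφ.2)
  have hψφ (z : 𝔻) : (symbol ψ (symbol φ z) : ℂ) = z := by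
    have := congrFun (apply_eq_comp_symbol φ (ψ coordinate)) z
    rw [show φ (ψ coordinate) = coordinate from Function.rightInverse_invFun hφ.2 _] at this
    exact this.symm
  refine (φ coordinate).2.1.1.exists_eq_mul_of_norm_eq fun z =>
    le_antisymm (norm_apply_coordinate_le φ z) ?_
  calc ‖(z : ℂ)‖ = ‖(symbol ψ (symbol φ z) : ℂ)‖ := by rw [hψφ]
    _ ≤ ‖(symbol φ z : ℂ)‖ := norm_apply_coordinate_le ψ _

end Endomorphism

end calANonUnitalSubalgebra

lemma IsAlgAutOn.exists_nonUnitalAlgHom {ι : Type} {A : NonUnitalSubalgebra ℂ (ι → ℂ)}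
    {T : (ι → ℂ) → (ι → ℂ)} (hT : IsAlgAutOn (A : Set (ι → ℂ)) T) :
    ∃ φ : A →ₙₐ[ℂ] A, Function.Bijective φ ∧ ∀ f : A, (φ f : ι → ℂ) = T f := by
  obtain ⟨hmem, hadd, hsmul, hmul, hinj, hsurj⟩ := hT
  refine ⟨{ toFun := fun f => ⟨T f, hmem f f.2⟩
            map_add' := fun f g => Subtype.ext (hadd f f.2 g g.2)
            map_zero' := Subtype.ext <| by simpa using hsmul 0 0 A.zero_mem
            map_mul' := fun f g => Subtype.ext (hmul f f.2 g g.2)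
            map_smul' := fun c f => Subtype.ext (hsmul c f f.2) },
    ⟨fun f g h => Subtype.ext (hinj f.2 g.2 (congrArg Subtype.val h)), fun g => ?_⟩,
    fun _ => rfl⟩
  obtain ⟨f, hf, hfg⟩ := hsurj g.2
  exact ⟨⟨f, hf⟩, Subtype.ext hfg⟩

lemma isAlgAutOn_of_eq_comp {ι : Type} (A : NonUnitalSubalgebra ℂ (ι → ℂ)) (σ : Equiv.Perm ι)
    (hσ : ∀ f ∈ A, f ∘ σ ∈ A) (hσ' : ∀ f ∈ A, f ∘ σ.symm ∈ A) {T : (ι → ℂ) → (ι → ℂ)}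
    (hT : ∀ f ∈ A, T f = f ∘ σ) : IsAlgAutOn (A : Set (ι → ℂ)) T := by
  refine ⟨fun f hf => hT f hf ▸ hσ f hf, fun f hf g hg => ?_, fun c f hf => ?_,
    fun f hf g hg => ?_, fun f hf g hg h => ?_, fun g hg => ?_⟩
  · rw [hT _ (A.add_mem hf hg), hT f hf, hT g hg]; rfl
  · rw [hT _ (A.smul_mem c hf), hT f hf]; rfl
  · rw [hT _ (A.mul_mem hf hg), hT f hf, hT g hg]; rfl
  · rw [hT f hf, hT g hg] at h
    exact σ.surjective.injective_comp_right h
  · refine ⟨g ∘ σ.symm, hσ' g hg, ?_⟩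
    rw [hT _ (hσ' g hg), Function.comp_assoc, σ.symm_comp_self, Function.comp_id]

lemma comp_circle_smul_mem_calA (c : Circle) {f : 𝔻 → ℂ} (hf : f ∈ calA) :
    f ∘ MulAction.toPerm c ∈ calA := by
  obtain ⟨⟨⟨F, hFd, hFe⟩, M, hM⟩, hf₀⟩ := hf
  have hmaps : MapsTo (fun x : ℂ => (c : ℂ) * x) (ball 0 1) (ball 0 1) := fun x hx => by
    simpa [Circle.norm_coe] using hx
  refine ⟨⟨⟨fun x => F (c * x), hFd.comp (differentiableOn_id.const_mul _) hmaps, fun z => ?_⟩,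
    M, fun z => hM _⟩, ?_⟩
  · simp [← Complex.UnitDisc.coe_circle_smul, hFe]
  · have hc₀ : c • (0 : 𝔻) = 0 :=
      Complex.UnitDisc.coe_injective (by simp [Complex.UnitDisc.coe_circle_smul])
    simpa [hc₀] using hf₀

/-- `T` is an algebra automorphism of `𝒜 = {f ∈ H^∞ : f(0) = 0}` iff
`T f = f ∘ (z ↦ e^{iθ} z)` for some `θ ∈ ℝ`. -/
theorem stmt_1 (T : (𝔻 → ℂ) → (𝔻 → ℂ)) :
    IsAlgAutOn calA T ↔
      ∃ θ : ℝ, ∃ φ : 𝔻 → 𝔻,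
        (∀ z : 𝔻, (↑(φ z) : ℂ) = Complex.exp (θ * Complex.I) * ↑z) ∧
        ∀ f ∈ calA, T f = f ∘ φ := by
  constructor
  · intro hT
    obtain ⟨φ, hφ, hφT⟩ := IsAlgAutOn.exists_nonUnitalAlgHom (A := 𝒜) hT
    obtain ⟨c, hc, hsymbol⟩ := calANonUnitalSubalgebra.exists_coe_symbol_eq_mul φ hφ
    have hexp : Complex.exp (c.arg * Complex.I) = c := by
      simpa [hc] using Complex.norm_mul_exp_arg_mul_I c
    refine ⟨c.arg, calANonUnitalSubalgebra.symbol φ, fun z => by rw [hsymbol, hexp], fun f hf => ?_⟩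
    rw [← hφT ⟨f, hf⟩, calANonUnitalSubalgebra.apply_eq_comp_symbol]
  · rintro ⟨θ, φ, hφ, hT⟩
    obtain rfl : φ = MulAction.toPerm (Circle.exp θ) := funext fun z =>
      Complex.UnitDisc.coe_injective (by simp [hφ, Complex.UnitDisc.coe_circle_smul])
    exact isAlgAutOn_of_eq_comp 𝒜 _ (fun _ => comp_circle_smul_mem_calA _)
      (fun _ => comp_circle_smul_mem_calA _⁻¹) hT
end
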